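/- Let w be a nonempty word over {L,R} starting with R, and suppose Ru is a suffix of w for some word u. Then LRu can be obtained from Lw by finitely many applications of the reduction rules LL ↦ L, RR ↦ R, LR ↦ (empty), RL ↦ (empty). -/
import Mathlib


/-- The alphabet of orbit pattern tags: `L` for a leftward move, `R` for a rightward move. -/
inductive Letter : Type
  | L : Letter
  | R : Letter
deriving DecidableEq

open Letter

/-- A continuous interval map `f` admits the orbit pattern tag `w` if there is an
eventually fixed orbit `x 0, x 1, ..., x w.length` of `f` (the last point being fixed,
all earlier points different from it) whose `j`-th move is labelled by the `j`-th
letter of `w`: `L` if the orbit moves left, `R` if it moves right. -/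
def Admits (f : ℝ → ℝ) (w : List Letter) : Prop :=
  ∃ x : ℕ → ℝ,
    (∀ j < w.length, f (x j) = x (j + 1)) ∧
    f (x w.length) = x w.length ∧
    (∀ j < w.length, x j ≠ x w.length) ∧
    (∀ j : Fin w.length,
      (w.get j = L ∧ x ((j : ℕ) + 1) < x (j : ℕ)) ∨
      (w.get j = R ∧ x (j : ℕ) < x ((j : ℕ) + 1)))

/-- One step of reduction on words: replace an adjacent `LL` by `L`, an adjacent `RR`
by `R`, or delete an adjacent `LR` or `RL`. -/
inductive Red : List Letter → List Letter → Prop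
  | ll (v v' : List Letter) : Red (v ++ [L, L] ++ v') (v ++ [L] ++ v')
  | rr (v v' : List Letter) : Red (v ++ [R, R] ++ v') (v ++ [R] ++ v')
  | lr (v v' : List Letter) : Red (v ++ [L, R] ++ v') (v ++ v')
  | rl (v v' : List Letter) : Red (v ++ [R, L] ++ v') (v ++ v')

/-- One derivation step: a reduction, or tail formation (passing to a suffix). -/
inductive Step : List Letter → List Letter → Prop
  | red {w u : List Letter} : Red w u → Step w u
  | tail {w u : List Letter} : u <:+ w → Step w u

/-- `u` is obtained from `w` by finitely many reductions. -/
def Reducible : List Letter → List Letter → Prop := Relation.ReflTransGen Red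

/-- `u` is derivable from `w`: finitely many reductions and tail formations, in any order. -/
def Derivable : List Letter → List Letter → Prop := Relation.ReflTransGen Step

lemma stmt10_aux : ∀ n w u, w.length ≤ n → (Letter.R :: u) <:+ w →
    Reducible (Letter.L :: w) (Letter.L :: Letter.R :: u) := by
  intro n
  induction n with
  | zero =>
    intro w u hl h
    rw [Nat.le_zero, List.length_eq_zero_iff] at hl
    subst hl
    exact absurd (List.eq_nil_of_suffix_nil h) (by simp)
  | succ n ih =>
    intro w u hl h
    cases w with
    | nil => exact absurd (List.eq_nil_of_suffix_nil h) (by simp)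
    | cons a rest =>
      rcases List.suffix_cons_iff.mp h with heq | hsuf
      · obtain ⟨rfl, rfl⟩ : a = Letter.R ∧ rest = u := by
          constructor <;> injection heq <;> simp_all
        exact Relation.ReflTransGen.refl
      · simp only [List.length_cons, Nat.succ_le_succ_iff] at hl
        cases a with
        | L =>
          refine Relation.ReflTransGen.head ?_ (ih rest u hl hsuf)
          exact Red.ll [] rest
        | R =>
          cases rest with
          | nil => exact absurd (List.eq_nil_of_suffix_nil hsuf) (by simp)
          | cons b r2 =>
            cases b with
            | R =>
              refine Relation.ReflTransGen.head ?_ (ih (Letter.R :: r2) u hl hsuf)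
              exact Red.rr [Letter.L] r2
            | L =>
              have h2 : (Letter.R :: u) <:+ r2 := by
                rcases List.suffix_cons_iff.mp hsuf with heq | h2
                · exact absurd heq (by simp)
                · exact h2
              refine Relation.ReflTransGen.head ?_
                (ih r2 u (le_trans (by simp) hl) h2)
              exact Red.rl [Letter.L] r2

/-- if w starts with R and Ru is a suffix of w, then LRu is reducible from Lw. -/
theorem stmt10 (w u : List Letter) (hw : w.head? = some Letter.R)
    (hu : (Letter.R :: u) <:+ w) :
    Reducible (Letter.L :: w) (Letter.L :: Letter.R :: u) :=
  stmt10_aux w.length w u le_rfl hu
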